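/- arXiv:2204.13674 — 5 statements merged into one kernel-verified Lean document; each statement's English description precedes it below -/
import Mathlib

section
/- Let F be a field, (V, ω) a symplectic vector space over F of dimension 2d, and let Φ₁, Φ₂ be complementary Lagrangian subspaces with bases e₁,…,e_d of Φ₁ and dual basis f₁,…,f_d of Φ₂ (so ω(e_α, f_β) = δ_{αβ}). Let Φ₃ be the graph of the map ψ₃ : Φ₁ → Φ₂ with ψ₃(e_α) = f_α, and Φ₄ the graph of ψ₄ with ψ₄(e_α) = λ_α f_α for pairwise distinct nonzero scalars λ_α ∈ F. Then there is no nonzero isotropic subspace W ≤ V satisfying dim(Φⱼ ∩ W) ≥ (1/2)·dim(W) for all j ∈ {1,2,3,4}. -/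
/-!
A graph `Γ` of a map `span e → span f` meets `span f` trivially, so if `Γ ∩ W` and `span f ∩ W`
each have at least half the dimension of `W`, then `W = (Γ ∩ W) ⊕ (span f ∩ W)` and the map
sends `span e ∩ W` into `W`. Applied to `Φ₄`, and then backwards to `Φ₃` (also a graph over
`span f`), this makes `span e ∩ W`, read in the coordinates `e`, a nonzero subspace of `F^d`
stable under multiplication by `λ`. Evaluating a Lagrange basis polynomial of the distinct `λ_α`
at `λ` projects it onto a coordinate line, so some `e_α ∈ W`; then `f_α ∈ W` through `Φ₃`,
contradicting isotropy since `ω(e_α, f_α) = 1`.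
-/

open Module Submodule Set

theorem linearIndependent_of_pairing_eq_ite {ι R M N : Type*} [DecidableEq ι] [CommRing R]
    [AddCommGroup M] [Module R M] [AddCommGroup N] [Module R N]
    (B : M →ₗ[R] N →ₗ[R] R) {e : ι → M} {f : ι → N}
    (h : ∀ i j, B (e i) (f j) = if i = j then 1 else 0) : LinearIndependent R e :=
  LinearIndependent.of_comp (LinearMap.pi fun j => B.flip (f j)) <| by
    have : (LinearMap.pi fun j => B.flip (f j)) ∘ e = fun i => Pi.single i 1 := by
      ext i j
      simp [h, Pi.single_apply, eq_comm]
    rw [this]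
    exact Pi.linearIndependent_single_one ι R

theorem Submodule.sup_eq_of_disjoint_of_finrank_le {K V : Type*} [DivisionRing K]
    [AddCommGroup V] [Module K V] [FiniteDimensional K V] {G B W : Submodule K V}
    (hG : G ≤ W) (hB : B ≤ W) (hGB : Disjoint G B)
    (h : finrank K W ≤ finrank K G + finrank K B) : G ⊔ B = W := by
  refine eq_of_le_of_finrank_le (sup_le hG hB) ?_
  have := finrank_sup_add_finrank_inf_eq G B
  rw [hGB.eq_bot, finrank_bot] at this
  omega

theorem Submodule.exists_single_mem_of_mul_mem {ι F : Type*} [Fintype ι] [DecidableEq ι]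
    [Field F] {S : Submodule F (ι → F)} (hS : S ≠ ⊥) {lam : ι → F}
    (hlam : Function.Injective lam) (hmul : ∀ s ∈ S, lam * s ∈ S) :
    ∃ i, Pi.single i 1 ∈ S := by
  obtain ⟨s, hsS, hs0⟩ := exists_mem_ne_zero_of_ne_bot hS
  obtain ⟨i, hi⟩ := Function.ne_iff.1 hs0
  have hpoly : ∀ p : Polynomial F, (fun j => p.eval (lam j)) * s ∈ S := by
    intro p
    induction p using Polynomial.induction_on with
    | C a =>
      convert S.smul_mem a hsS using 1
      ext j
      simp
    | add p q hp hq =>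
      convert S.add_mem hp hq using 1
      ext j
      simp [add_mul]
    | monomial n a ih =>
      convert hmul _ ih using 1
      ext j
      simp only [Pi.mul_apply, Polynomial.eval_mul, Polynomial.eval_C, Polynomial.eval_pow,
        Polynomial.eval_X]
      ring
  have hLi : (fun j => (Lagrange.basis Finset.univ lam i).eval (lam j)) * s =
      s i • Pi.single i 1 := by
    ext j
    rcases eq_or_ne i j with rfl | hij
    · simp [Lagrange.eval_basis_self hlam.injOn]
    · simp [Lagrange.eval_basis_of_ne hij, hij.symm]
  refine ⟨i, ?_⟩
  simpa [hLi, smul_smul, inv_mul_cancel₀ hi] using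
    S.smul_mem (s i)⁻¹ (hpoly (Lagrange.basis Finset.univ lam i))

section Graph

variable {F V ι : Type*} [Field F] [AddCommGroup V] [Module F V] [Fintype ι]

theorem LinearIndependent.eq_zero_of_sum_smul_mem {e : ι → V} {P : Submodule F V}
    (he : LinearIndependent F e) (hP : Disjoint (span F (range e)) P) {t : ι → F}
    (ht : ∑ i, t i • e i ∈ P) : t = 0 :=
  funext <| Fintype.linearIndependent_iff.1 he t <|
    (disjoint_def.1 hP) _ (mem_span_range_iff_exists_fun F |>.2 ⟨t, rfl⟩) ht

theorem sum_smul_mem_of_finrank_graph_inf [FiniteDimensional F V] {e f g : ι → V} (c : ι → F)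
    (hg : ∀ i, g i = e i + c i • f i) (he : LinearIndependent F e)
    (hef : Disjoint (span F (range e)) (span F (range f))) {W : Submodule F V}
    (hgW : finrank F W ≤ 2 * finrank F ↥(span F (range g) ⊓ W))
    (hfW : finrank F W ≤ 2 * finrank F ↥(span F (range f) ⊓ W))
    {s : ι → F} (hs : ∑ i, s i • e i ∈ W) : ∑ i, (c i * s i) • f i ∈ W := by
  have hsum : ∀ t : ι → F, ∑ i, t i • g i = ∑ i, t i • e i + ∑ i, (c i * t i) • f i := by
    intro t
    simp only [hg, smul_add, Finset.sum_add_distrib, smul_smul, mul_comm]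
  have hf_mem : ∀ t : ι → F, ∑ i, t i • f i ∈ span F (range f) := fun t =>
    mem_span_range_iff_exists_fun F |>.2 ⟨t, rfl⟩
  have hgf : Disjoint (span F (range g)) (span F (range f)) := by
    refine disjoint_def.2 fun x hxg hxf => ?_
    obtain ⟨t, rfl⟩ := mem_span_range_iff_exists_fun F |>.1 hxg
    have ht : t = 0 := he.eq_zero_of_sum_smul_mem hef <| by
      simpa [hsum] using sub_mem hxf (hf_mem fun i => c i * t i)
    simp [ht]
  have hW : (span F (range g) ⊓ W) ⊔ (span F (range f) ⊓ W) = W :=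
    sup_eq_of_disjoint_of_finrank_le inf_le_right inf_le_right
    (hgf.mono inf_le_left inf_le_left) (by omega)
  obtain ⟨x, ⟨hxg, hxW⟩, y, ⟨hyf, -⟩, hxy⟩ := mem_sup.1 (hW ▸ hs)
  obtain ⟨t, rfl⟩ := mem_span_range_iff_exists_fun F |>.1 hxg
  have hst : s - t = 0 := he.eq_zero_of_sum_smul_mem hef <| by
    have : ∑ i, (s - t) i • e i = ∑ i, (c i * t i) • f i + y := by
      simp only [Pi.sub_apply, sub_smul, Finset.sum_sub_distrib, ← hxy, hsum]
      abel
    rw [this]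
    exact add_mem (hf_mem _) hyf
  obtain rfl := (sub_eq_zero.1 hst).symm
  have := sub_mem hxW hs
  rwa [hsum, add_sub_cancel_left] at this

end Graph

theorem stmt0_general {F V : Type*} [Field F] [AddCommGroup V] [Module F V]
    [FiniteDimensional F V]
    (ω : LinearMap.BilinForm F V)
    (d : ℕ)
    (e f : Fin d → V)
    (hef : ∀ α β, ω (e α) (f β) = if α = β then 1 else 0)
    (hdisj : Submodule.span F (Set.range e) ⊓ Submodule.span F (Set.range f) = ⊥)
    (lam : Fin d → F) (hlaminj : Function.Injective lam) :
    ¬ ∃ W : Submodule F V, W ≠ ⊥ ∧ (∀ x ∈ W, ∀ y ∈ W, ω x y = 0) ∧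
      Module.finrank F W ≤
        2 * Module.finrank F ↥(Submodule.span F (Set.range e) ⊓ W) ∧
      Module.finrank F W ≤
        2 * Module.finrank F ↥(Submodule.span F (Set.range f) ⊓ W) ∧
      Module.finrank F W ≤
        2 * Module.finrank F ↥(Submodule.span F (Set.range fun α => e α + f α) ⊓ W) ∧
      Module.finrank F W ≤
        2 * Module.finrank F ↥(Submodule.span F (Set.range fun α => e α + lam α • f α) ⊓ W) := by
  rintro ⟨W, hW0, hiso, h1, h2, h3, h4⟩
  have he := linearIndependent_of_pairing_eq_ite ω hef
  have hf := linearIndependent_of_pairing_eq_ite ω.flip (e := f) (f := e) fun α β => by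
    simpa [eq_comm] using hef β α
  have hef' : Disjoint (span F (range e)) (span F (range f)) := disjoint_iff.2 hdisj
  let S : Submodule F (Fin d → F) := W.comap (Fintype.linearCombination F e)
  have hmem : ∀ s, s ∈ S ↔ ∑ α, s α • e α ∈ W := fun s => by
    simp [S, Fintype.linearCombination_apply]
  have hS : S ≠ ⊥ := by
    have : span F (range e) ⊓ W ≠ ⊥ := fun h => hW0 <| finrank_eq_zero.1 <| by
      rw [h, finrank_bot] at h1
      omega
    obtain ⟨x, ⟨hxe, hxW⟩, hx0⟩ := exists_mem_ne_zero_of_ne_bot this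
    obtain ⟨s, rfl⟩ := mem_span_range_iff_exists_fun F |>.1 hxe
    exact (Submodule.ne_bot_iff S).2 ⟨s, (hmem s).2 hxW, by rintro rfl; simp at hx0⟩
  -- the graph `Φ₄` sends `S` to `lam * S` in the coordinates `f`, and `Φ₃` brings it back
  have hlamS : ∀ s ∈ S, lam * s ∈ S := fun s hs => (hmem _).2 <| by
    simpa using sum_smul_mem_of_finrank_graph_inf 1 (fun α => by simp [add_comm]) hf hef'.symm
      h3 h1 (sum_smul_mem_of_finrank_graph_inf lam (fun α => rfl) he hef' h4 h2 ((hmem s).1 hs))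
  obtain ⟨α, hα⟩ := exists_single_mem_of_mul_mem hS hlaminj hlamS
  have heα : e α ∈ W := by simpa [Pi.single_apply] using (hmem _).1 hα
  have hfα : f α ∈ W := by
    simpa [Pi.single_apply] using
      sum_smul_mem_of_finrank_graph_inf 1 (fun α => by simp) he hef' h3 h2 ((hmem _).1 hα)
  simpa [hef] using hiso _ heα _ hfα

/-- Let `(V, ω)` be a symplectic vector space of dimension `2d` over a field `F`, with
complementary Lagrangian subspaces `Φ₁ = span(e)`, `Φ₂ = span(f)` spanned by dual bases
(`ω(e_α, f_β) = δ_{αβ}`).  Let `Φ₃` be the graph of `ψ₃ : e_α ↦ f_α` and `Φ₄` the graph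
of `ψ₄ : e_α ↦ λ_α f_α` for pairwise distinct nonzero scalars `λ_α`.  Then there is no
nonzero isotropic subspace `W ≤ V` with `dim(Φⱼ ∩ W) ≥ (1/2)·dim W` for `j = 1,2,3,4`. -/
theorem stmt0 {F V : Type*} [Field F] [AddCommGroup V] [Module F V]
    [FiniteDimensional F V]
    (ω : LinearMap.BilinForm F V) (halt : ω.IsAlt) (hnd : ω.Nondegenerate)
    (d : ℕ) (hdim : Module.finrank F V = 2 * d)
    (e f : Fin d → V)
    (hef : ∀ α β, ω (e α) (f β) = if α = β then 1 else 0)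
    (hee : ∀ α β, ω (e α) (e β) = 0) (hff : ∀ α β, ω (f α) (f β) = 0)
    (hsup : Submodule.span F (Set.range e) ⊔ Submodule.span F (Set.range f) = ⊤)
    (hdisj : Submodule.span F (Set.range e) ⊓ Submodule.span F (Set.range f) = ⊥)
    (lam : Fin d → F) (hlam0 : ∀ α, lam α ≠ 0) (hlaminj : Function.Injective lam) :
    ¬ ∃ W : Submodule F V, W ≠ ⊥ ∧ (∀ x ∈ W, ∀ y ∈ W, ω x y = 0) ∧
      Module.finrank F W ≤
        2 * Module.finrank F ↥(Submodule.span F (Set.range e) ⊓ W) ∧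
      Module.finrank F W ≤
        2 * Module.finrank F ↥(Submodule.span F (Set.range f) ⊓ W) ∧
      Module.finrank F W ≤
        2 * Module.finrank F ↥(Submodule.span F (Set.range fun α => e α + f α) ⊓ W) ∧
      Module.finrank F W ≤
        2 * Module.finrank F ↥(Submodule.span F (Set.range fun α => e α + lam α • f α) ⊓ W) :=
  stmt0_general ω d e f hef hdisj lam hlaminj
end

section
/- Let E/F be a Galois extension of fields with Galois group Γ (possibly infinite, acting with open stabilizers so that every element of E lies in a finite subextension), equipped with a normalized trace map tr : E → F restricting to the identity on F, such that the trace pairing is nondegenerate on every finite subextension. Let D be an E-vector space with a semilinear Γ-action, and let End_Γ(D) denote the F-algebra of E-linear Γ-equivariant endomorphisms of D. Then the natural map E ⊗_F End_Γ(D) → End_E(D) is injective. -/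
open scoped TensorProduct

/-!
Let `ψ₁, …, ψₖ` be `F`-linearly independent `Γ`-equivariant endomorphisms and suppose
`∑ λᵢ ψᵢ = 0` with `λᵢ ∈ E`. Multiplying by any `α ∈ E` and conjugating by `σ ∈ Γ` gives
`∑ σ(α λᵢ) ψᵢ = 0`, and since the trace is an `F`-combination of finitely many conjugates on
any finite set, `∑ tr(α λᵢ) ψᵢ = 0`. Independence over `F` gives `tr(α λᵢ) = 0` for every `α`,
so `λᵢ = 0` by nondegeneracy. Thus an `F`-basis of `End_Γ(D)` stays `E`-linearly independent in
`End_E(D)`, which is the injectivity of `E ⊗_F End_Γ(D) → End_E(D)`.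
-/

section

variable {F E : Type*} [Field F] [Field E] [Algebra F E] {Γ : Type*} [Group Γ]
  [MulSemiringAction Γ E] {ι : Type*}

lemma sum_conj_smul_eq_zero {D : Type*} [AddCommGroup D] [Module E D] [DistribMulAction Γ D]
    (hsemi : ∀ (σ : Γ) (c : E) (x : D), σ • (c • x) = (σ • c) • (σ • x))
    {ψ : ι → D →ₗ[E] D} (hψ : ∀ i (σ : Γ) x, ψ i (σ • x) = σ • ψ i x)
    {t : Finset ι} {lam : ι → E} (h : ∑ i ∈ t, lam i • ψ i = 0) (σ : Γ) :
    ∑ i ∈ t, (σ • lam i) • ψ i = 0 := by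
  ext x
  have hx : ∑ i ∈ t, lam i • ψ i (σ⁻¹ • x) = 0 := by
    simpa using LinearMap.congr_fun h (σ⁻¹ • x)
  calc (∑ i ∈ t, (σ • lam i) • ψ i) x
      = σ • ∑ i ∈ t, lam i • ψ i (σ⁻¹ • x) := by
        simp only [LinearMap.sum_apply, LinearMap.smul_apply, Finset.smul_sum, hsemi, ← hψ,
          smul_inv_smul]
    _ = 0 := by rw [hx, smul_zero]

lemma sum_algebraMap_trace_smul_eq_zero {M : Type*} [AddCommGroup M] [Module E M]
    (tr : E →ₗ[F] F)
    (htr_comb : ∀ s : Finset E, ∃ (t : Finset Γ) (c : Γ → F),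
        ∀ x ∈ s, algebraMap F E (tr x) = ∑ σ ∈ t, algebraMap F E (c σ) * (σ • x))
    {v : ι → M} {t : Finset ι} {μ : ι → E} (h : ∀ σ : Γ, ∑ i ∈ t, (σ • μ i) • v i = 0) :
    ∑ i ∈ t, algebraMap F E (tr (μ i)) • v i = 0 := by
  classical
  obtain ⟨T, c, hc⟩ := htr_comb (t.image μ)
  calc ∑ i ∈ t, algebraMap F E (tr (μ i)) • v i
      = ∑ i ∈ t, ∑ σ ∈ T, algebraMap F E (c σ) • (σ • μ i) • v i := by
        refine Finset.sum_congr rfl fun i hi => ?_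
        simp only [hc _ (Finset.mem_image_of_mem μ hi), Finset.sum_smul, mul_smul]
    _ = ∑ σ ∈ T, algebraMap F E (c σ) • ∑ i ∈ t, (σ • μ i) • v i := by
        rw [Finset.sum_comm]
        simp only [Finset.smul_sum]
    _ = 0 := Finset.sum_eq_zero fun σ _ => by rw [h σ, smul_zero]

lemma LinearIndependent.of_equivariant {D : Type*} [AddCommGroup D] [Module E D] [Module F D]
    [IsScalarTower F E D] [SMulCommClass E F D] [DistribMulAction Γ D]
    (hsemi : ∀ (σ : Γ) (c : E) (x : D), σ • (c • x) = (σ • c) • (σ • x))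
    (tr : E →ₗ[F] F)
    (htr_comb : ∀ s : Finset E, ∃ (t : Finset Γ) (c : Γ → F),
        ∀ x ∈ s, algebraMap F E (tr x) = ∑ σ ∈ t, algebraMap F E (c σ) * (σ • x))
    (htr_nondeg : ∀ lam : E, (∀ α : E, tr (α * lam) = 0) → lam = 0)
    {ψ : ι → D →ₗ[E] D} (hψ : ∀ i (σ : Γ) x, ψ i (σ • x) = σ • ψ i x)
    (hind : LinearIndependent F ψ) :
    LinearIndependent E ψ := by
  rw [linearIndependent_iff'] at hind ⊢
  intro t lam h i hi
  refine htr_nondeg _ fun α => hind t (fun j => tr (α * lam j)) ?_ i hi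
  have hα : ∑ j ∈ t, (α * lam j) • ψ j = 0 := by
    simp only [mul_smul, ← Finset.smul_sum, h, smul_zero]
  simpa only [algebraMap_smul] using
    sum_algebraMap_trace_smul_eq_zero tr htr_comb (sum_conj_smul_eq_zero hsemi hψ hα)

end

/-- Let `E/F` be a Galois extension with group `Γ` acting semilinearly on an `E`-vector
space `D`, equipped with a normalized trace `tr : E → F` restricting to the identity on
`F`, expressible on finite sets as an `F`-linear combination of Galois conjugates, and
with nondegenerate trace pairing.  If `S = End_Γ(D)` is the `F`-algebra of `E`-linear
`Γ`-equivariant endomorphisms of `D`, then the natural map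
`E ⊗_F End_Γ(D) → End_E(D)`, `λ ⊗ ψ ↦ λ • ψ`, is injective. -/
theorem stmt3 {F E : Type*} [Field F] [Field E] [Algebra F E]
    {Γ : Type*} [Group Γ] [MulSemiringAction Γ E]
    {D : Type*} [AddCommGroup D] [Module E D] [Module F D] [IsScalarTower F E D]
    [SMulCommClass E F D] [DistribMulAction Γ D]
    (hsemi : ∀ (σ : Γ) (c : E) (x : D), σ • (c • x) = (σ • c) • (σ • x))
    (tr : E →ₗ[F] F)
    (htr_comb : ∀ s : Finset E, ∃ (t : Finset Γ) (c : Γ → F),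
        ∀ x ∈ s, algebraMap F E (tr x) = ∑ σ ∈ t, algebraMap F E (c σ) * (σ • x))
    (htr_nondeg : ∀ lam : E, (∀ α : E, tr (α * lam) = 0) → lam = 0)
    (S : Submodule F (D →ₗ[E] D))
    (hS : ∀ ψ : D →ₗ[E] D, ψ ∈ S ↔ ∀ (σ : Γ) (x : D), ψ (σ • x) = σ • ψ x) :
    Function.Injective
      (TensorProduct.lift (LinearMap.mk₂ F
        (fun (lam : E) (ψ : S) => lam • (ψ : D →ₗ[E] D))
        (fun a b ψ => add_smul a b _)
        (fun c a ψ => by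
          ext x
          simp [smul_assoc])
        (fun a ψ₁ ψ₂ => by
          simp [smul_add])
        (fun c a ψ => by
          ext x
          show a • ((c • ψ : S) : D →ₗ[E] D) x = c • (a • (ψ : D →ₗ[E] D)) x
          rw [Submodule.coe_smul]
          simp only [LinearMap.smul_apply]
          exact smul_comm a c _))) := by
  rw [injective_iff_map_eq_zero]
  intro z hz
  let b := Module.Basis.ofVectorSpace F S
  have hindE : LinearIndependent E fun i => (b i : D →ₗ[E] D) :=
    .of_equivariant hsemi tr htr_comb htr_nondeg (fun i => (hS _).mp (b i).2)
      (b.linearIndependent.map' S.subtype S.ker_subtype)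
  obtain ⟨c, rfl⟩ := TensorProduct.eq_repr_basis_right b z
  have hc : c = 0 := by
    refine linearIndependent_iff.mp hindE c ?_
    simpa [Finsupp.linearCombination_apply, map_finsuppSum] using hz
  simp [hc]
end

section
/- Let K be a field, R = K⟦t₁,…,t_n⟧ the formal power series ring with its continuous universal derivation d : R → Ω := ⊕ᵢ R·dtᵢ, and let ω be an m×m matrix with entries in Ω satisfying the integrability condition dω + ω ∧ ω = 0. Then there exists a unique m×m matrix T with entries in R satisfying dT = −ω·T and T ≡ I_m modulo the maximal ideal (i.e., T(0) = I_m); moreover T is invertible in M_m(R). -/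
/-- The partial derivative `∂ᵢ` on the formal power series ring `K⟦t₁,…,t_n⟧`:
the coefficient of `∂ᵢ f` at the exponent `e` is `(e(i)+1)` times the coefficient of `f`
at `e + δᵢ`.  These are the components of the continuous universal derivation
`d : R → Ω = ⊕ᵢ R·dtᵢ`. -/
noncomputable def mvPderiv {K : Type*} [CommRing K] {n : ℕ} (i : Fin n)
    (f : MvPowerSeries (Fin n) K) : MvPowerSeries (Fin n) K :=
  fun e => ((e i + 1 : ℕ) : K) * MvPowerSeries.coeff (R := K) (e + Finsupp.single i 1) f

/-!
Write `θ = ∑ⱼ tⱼ ωⱼ` and `E = ∑ⱼ tⱼ ∂ⱼ` for the Euler operator, which multiplies the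
coefficient of `t^e` by `|e|`. Every solution of `∂ᵢT = -ωᵢT` satisfies `E T = -θ T`, and since
`θ` has no constant term this equation determines `T` degree by degree from `T(0)`: this gives
uniqueness, and a candidate `T` with `T(0) = 1`. Flatness says exactly that the covariant
derivatives `∇ᵢ = ∂ᵢ + ωᵢ` commute, so applying `∇ᵢ` to `∑ⱼ tⱼ ∇ⱼT = E T + θ T = 0` gives
`(1 + E + θ) ∇ᵢT = 0`, and the same degree recursion forces `∇ᵢT = 0`. Finally `det T` has
constant term `1`, so `T` is invertible.
-/

open MvPowerSeries Finset Finsupp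

theorem mvPderiv_eq_pderiv {K : Type*} [CommRing K] {n : ℕ} (i : Fin n) :
    mvPderiv (K := K) i = pderiv K i := by
  funext f
  ext e
  rw [coeff_pderiv, coeff_apply, mvPderiv, mul_comm]
  push_cast
  rfl

namespace Derivation

variable {R A : Type*} [CommSemiring R] [CommSemiring A] [Algebra R A] (D : Derivation R A A)
  {l m p : Type*}

theorem map_matrix_mul [Fintype m] (M : Matrix l m A) (N : Matrix m p A) :
    (M * N).map D = M.map D * N + M * N.map D := by
  ext a b
  simp only [Matrix.map_apply, Matrix.mul_apply, Matrix.add_apply, map_sum, leibniz,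
    smul_eq_mul, ← sum_add_distrib]
  exact sum_congr rfl fun _ _ => by ring

theorem map_matrix_sum {β : Type*} (s : Finset β) (M : β → Matrix l m A) :
    (∑ j ∈ s, M j).map D = ∑ j ∈ s, (M j).map D := by
  simpa only [LinearMap.mapMatrix_apply, coeFn_coe] using map_sum D.toLinearMap.mapMatrix M s

theorem map_matrix_smul (a : A) (M : Matrix l m A) :
    (a • M).map D = D a • M + a • M.map D := by
  ext i j
  simp only [Matrix.map_apply, Matrix.smul_apply, Matrix.add_apply, smul_eq_mul, leibniz]
  ring

end Derivation

namespace MvPowerSeries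

variable {σ R : Type*} [CommSemiring R]

theorem pderiv_comm (i j : σ) (f : MvPowerSeries σ R) :
    pderiv R i (pderiv R j f) = pderiv R j (pderiv R i f) := by
  classical
  ext e
  simp only [coeff_pderiv, add_right_comm e (single i 1) (single j 1), mul_assoc]
  congr 1
  rcases eq_or_ne i j with rfl | hij
  · rfl
  · simp [hij, hij.symm, mul_comm]

theorem coeff_sum_X_mul_pderiv [Fintype σ] (e : σ →₀ ℕ) (f : MvPowerSeries σ R) :
    coeff e (∑ j, X j * pderiv R j f) = e.degree • coeff e f := by
  classical
  rw [map_sum, degree_eq_sum, sum_smul]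
  refine sum_congr rfl fun j _ => ?_
  rw [X_def, coeff_monomial_mul, one_mul]
  split_ifs with hj
  · rw [coeff_pderiv, tsub_add_cancel_of_le hj, nsmul_eq_mul, mul_comm]
    simp only [tsub_apply, single_eq_same]
    norm_cast
    rw [Nat.sub_add_cancel (single_le_iff.1 hj)]
  · have : e j = 0 := by simpa [single_le_iff] using hj
    rw [this, zero_smul]

end MvPowerSeries

namespace MatrixPowerSeries

variable {σ R K : Type*} {ι κ ν : Type*}

section Coefficients

theorem ext_map_coeff [Semiring R] {M N : Matrix ι κ (MvPowerSeries σ R)}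
    (h : ∀ e, M.map (coeff e) = N.map (coeff e)) : M = N :=
  Matrix.ext fun a b => MvPowerSeries.ext fun e => congr_fun₂ (h e) a b

theorem map_coeff_zero [Semiring R] (M : Matrix ι κ (MvPowerSeries σ R)) :
    M.map (coeff 0) = M.map constantCoeff := by
  ext
  exact coeff_zero_eq_constantCoeff_apply _

variable [CommSemiring R] [DecidableEq σ]

theorem map_coeff_mul [Fintype κ] (e : σ →₀ ℕ)
    (M : Matrix ι κ (MvPowerSeries σ R)) (N : Matrix κ ν (MvPowerSeries σ R)) :
    (M * N).map (coeff e) = ∑ p ∈ antidiagonal e, M.map (coeff p.1) * N.map (coeff p.2) := by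
  ext a b
  simp only [Matrix.map_apply, Matrix.mul_apply, map_sum, coeff_mul, Matrix.sum_apply]
  exact sum_comm

theorem degree_lt_of_mem_antidiagonal {e : σ →₀ ℕ} {p : (σ →₀ ℕ) × (σ →₀ ℕ)}
    (hp : p ∈ antidiagonal e) (h : p.1 ≠ 0) : p.2.degree < e.degree := by
  rw [← mem_antidiagonal.1 hp, map_add, lt_add_iff_pos_left, pos_iff_ne_zero]
  exact (degree_eq_zero_iff _).not.2 h

theorem map_coeff_mul_eq_zero [Fintype ι] {θ : Matrix ι ι (MvPowerSeries σ R)}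
    {S : Matrix ι κ (MvPowerSeries σ R)} (hθ : θ.map constantCoeff = 0) (e : σ →₀ ℕ)
    (hS : ∀ b : σ →₀ ℕ, b.degree < e.degree → S.map (coeff b) = 0) :
    (θ * S).map (coeff e) = 0 := by
  rw [map_coeff_mul]
  refine sum_eq_zero fun p hp => ?_
  rcases eq_or_ne p.1 0 with h | h
  · rw [h, map_coeff_zero, hθ, Matrix.zero_mul]
  · rw [hS p.2 (degree_lt_of_mem_antidiagonal hp h), Matrix.mul_zero]

end Coefficients

section Euler

variable [Fintype σ]

noncomputable def euler [CommSemiring R] (M : Matrix ι κ (MvPowerSeries σ R)) :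
    Matrix ι κ (MvPowerSeries σ R) :=
  ∑ j, (X j : MvPowerSeries σ R) • M.map (pderiv R j)

theorem map_coeff_euler [CommSemiring R] (e : σ →₀ ℕ) (M : Matrix ι κ (MvPowerSeries σ R)) :
    (euler M).map (coeff e) = e.degree • M.map (coeff e) := by
  ext a b
  simp only [euler, Matrix.map_apply, Matrix.sum_apply, Matrix.smul_apply, smul_eq_mul,
    coeff_sum_X_mul_pderiv]

theorem euler_sub [CommRing R] (M N : Matrix ι κ (MvPowerSeries σ R)) :
    euler (M - N) = euler M - euler N := by
  simp only [euler, ← sum_sub_distrib, ← smul_sub, Matrix.map_sub _ (map_sub _)]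

theorem eq_zero_of_nsmul_add_euler_eq_mul [Field K] [CharZero K] [Fintype ι]
    {θ : Matrix ι ι (MvPowerSeries σ K)} {S : Matrix ι κ (MvPowerSeries σ K)} (r : ℕ)
    (hθ : θ.map constantCoeff = 0) (hS₀ : r = 0 → S.map constantCoeff = 0)
    (h : r • S + euler S = θ * S) : S = 0 := by
  classical
  suffices ∀ d, ∀ e : σ →₀ ℕ, e.degree = d → S.map (coeff e) = 0 from
    ext_map_coeff fun e => by rw [this _ e rfl]; ext; simp
  intro d
  induction d using Nat.strong_induction_on with
  | _ d ih =>
  rintro e rfl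
  by_cases hre : r + e.degree = 0
  · rw [(degree_eq_zero_iff e).1 (by omega), map_coeff_zero, hS₀ (by omega)]
  have hcoeff := congr_arg (Matrix.map · (coeff e)) h
  rw [map_coeff_mul_eq_zero hθ e fun b hb => ih _ hb b rfl, Matrix.map_add (coeff e) (map_add _),
    map_coeff_euler, ← LinearMap.mapMatrix_apply, map_nsmul, LinearMap.mapMatrix_apply,
    ← add_smul, ← Nat.cast_smul_eq_nsmul K] at hcoeff
  exact (smul_eq_zero.1 hcoeff).resolve_left (Nat.cast_ne_zero.2 hre)

end Euler

section EulerSolution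

variable [Field K] [DecidableEq σ] [Fintype ι] [DecidableEq ι]

/-- The coefficients of the solution of `euler T = θ * T`, `T(0) = 1`, when `θ(0) = 0`. -/
noncomputable def eulerCoeff (θ : Matrix ι ι (MvPowerSeries σ K)) (e : σ →₀ ℕ) :
    Matrix ι ι K :=
  if e = 0 then 1 else
    (e.degree : K)⁻¹ • ∑ p ∈ antidiagonal e,
      if _ : p.2.degree < e.degree then θ.map (coeff p.1) * eulerCoeff θ p.2 else 0
termination_by e.degree

noncomputable def eulerSolution (θ : Matrix ι ι (MvPowerSeries σ K)) :
    Matrix ι ι (MvPowerSeries σ K) :=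
  Matrix.of fun a b e => eulerCoeff θ e a b

theorem map_coeff_eulerSolution (θ : Matrix ι ι (MvPowerSeries σ K)) (e : σ →₀ ℕ) :
    (eulerSolution θ).map (coeff e) = eulerCoeff θ e := by
  ext a b
  rw [Matrix.map_apply, coeff_apply]
  rfl

theorem map_constantCoeff_eulerSolution (θ : Matrix ι ι (MvPowerSeries σ K)) :
    (eulerSolution θ).map constantCoeff = 1 := by
  rw [← map_coeff_zero, map_coeff_eulerSolution, eulerCoeff, if_pos rfl]

theorem degree_smul_eulerCoeff [CharZero K] (θ : Matrix ι ι (MvPowerSeries σ K))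
    (e : σ →₀ ℕ) :
    (e.degree : K) • eulerCoeff θ e = ∑ p ∈ antidiagonal e,
      if p.2.degree < e.degree then θ.map (coeff p.1) * eulerCoeff θ p.2 else 0 := by
  rw [eulerCoeff]
  split_ifs with he
  · subst he
    simp
  · rw [smul_smul, mul_inv_cancel₀ (Nat.cast_ne_zero.2 ((degree_eq_zero_iff e).not.2 he)),
      one_smul]
    simp only [dite_eq_ite]

variable [Fintype σ] [CharZero K]

theorem euler_eulerSolution {θ : Matrix ι ι (MvPowerSeries σ K)}
    (hθ : θ.map constantCoeff = 0) : euler (eulerSolution θ) = θ * eulerSolution θ := by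
  refine ext_map_coeff fun e => ?_
  rw [map_coeff_euler, map_coeff_mul, map_coeff_eulerSolution, ← Nat.cast_smul_eq_nsmul K,
    degree_smul_eulerCoeff]
  refine sum_congr rfl fun p hp => ?_
  rw [map_coeff_eulerSolution, ite_eq_left_iff]
  intro h
  rw [not_imp_comm.1 (degree_lt_of_mem_antidiagonal hp) h, map_coeff_zero, hθ, Matrix.zero_mul]

theorem eq_eulerSolution {θ S : Matrix ι ι (MvPowerSeries σ K)}
    (hθ : θ.map constantCoeff = 0) (hS : euler S = θ * S) (hS₀ : S.map constantCoeff = 1) :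
    S = eulerSolution θ := by
  refine sub_eq_zero.1 (eq_zero_of_nsmul_add_euler_eq_mul 0 hθ (fun _ => ?_) ?_)
  · rw [Matrix.map_sub _ (map_sub _), hS₀, map_constantCoeff_eulerSolution, sub_self]
  · rw [zero_smul, zero_add, euler_sub, hS, euler_eulerSolution hθ, Matrix.mul_sub]

end EulerSolution

section Connection

variable [CommSemiring R]

/-- The contraction `∑ⱼ tⱼ ωⱼ` of `ω = ∑ⱼ ωⱼ dtⱼ` with the Euler vector field. -/
noncomputable def eulerContraction [Fintype σ] (ω : σ → Matrix ι ι (MvPowerSeries σ R)) :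
    Matrix ι ι (MvPowerSeries σ R) :=
  ∑ j, (X j : MvPowerSeries σ R) • ω j

theorem map_constantCoeff_eulerContraction [Fintype σ]
    (ω : σ → Matrix ι ι (MvPowerSeries σ R)) :
    (eulerContraction ω).map constantCoeff = 0 := by
  ext a b
  simp [eulerContraction, Matrix.sum_apply]

variable [Fintype ι] (ω : σ → Matrix ι ι (MvPowerSeries σ R))

/-- The covariant derivative `∇ᵢ = ∂ᵢ + ωᵢ` of the connection `d + ω`. -/
noncomputable def covDeriv (i : σ) (T : Matrix ι κ (MvPowerSeries σ R)) :
    Matrix ι κ (MvPowerSeries σ R) :=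
  T.map (pderiv R i) + ω i * T

variable {ω}

theorem covDeriv_zero (i : σ) : covDeriv ω i (0 : Matrix ι κ (MvPowerSeries σ R)) = 0 := by
  simp [covDeriv]

variable [Fintype σ]

theorem sum_X_smul_covDeriv (T : Matrix ι κ (MvPowerSeries σ R)) :
    ∑ j, (X j : MvPowerSeries σ R) • covDeriv ω j T = euler T + eulerContraction ω * T := by
  simp only [covDeriv, smul_add, sum_add_distrib, euler, eulerContraction, Matrix.sum_mul,
    Matrix.smul_mul]

theorem covDeriv_sum_X_smul [DecidableEq σ] (i : σ) (V : σ → Matrix ι κ (MvPowerSeries σ R)) :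
    covDeriv ω i (∑ j, (X j : MvPowerSeries σ R) • V j)
      = V i + ∑ j, (X j : MvPowerSeries σ R) • covDeriv ω i (V j) := by
  simp only [covDeriv, Derivation.map_matrix_sum, Derivation.map_matrix_smul, pderiv_X,
    Pi.single_apply, ite_smul, one_smul, zero_smul, Finset.sum_ite_eq', mem_univ, if_true,
    Matrix.mul_sum, Matrix.mul_smul, smul_add, sum_add_distrib]
  abel

end Connection

section FlatConnection

variable [CommRing R]

theorem map_constantCoeff_neg_eulerContraction [Fintype σ]
    (ω : σ → Matrix ι ι (MvPowerSeries σ R)) :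
    (-eulerContraction ω).map constantCoeff = 0 := by
  rw [Matrix.map_neg _ (map_neg _), map_constantCoeff_eulerContraction, neg_zero]

variable [Fintype ι] (ω : σ → Matrix ι ι (MvPowerSeries σ R))

/-- The integrability condition `dω + ω ∧ ω = 0`, written out in coordinates. -/
def IsFlat : Prop :=
  ∀ i j, (ω j).map (pderiv R i) - (ω i).map (pderiv R j) + ω i * ω j - ω j * ω i = 0

variable {ω}

theorem covDeriv_comm (hω : IsFlat ω) (i j : σ) (T : Matrix ι κ (MvPowerSeries σ R)) :
    covDeriv ω i (covDeriv ω j T) = covDeriv ω j (covDeriv ω i T) := by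
  rw [← sub_eq_zero]
  have hT : (T.map (pderiv R j)).map (pderiv R i) = (T.map (pderiv R i)).map (pderiv R j) := by
    simp only [Matrix.map_map, Function.comp_def, pderiv_comm]
  calc covDeriv ω i (covDeriv ω j T) - covDeriv ω j (covDeriv ω i T)
      = ((ω j).map (pderiv R i) - (ω i).map (pderiv R j) + ω i * ω j - ω j * ω i) * T := by
        simp only [covDeriv, Matrix.map_add _ (map_add _), Derivation.map_matrix_mul, hT,
          Matrix.mul_add, Matrix.add_mul, Matrix.sub_mul, Matrix.mul_assoc]
        abel
    _ = 0 := by rw [hω i j, Matrix.zero_mul]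

end FlatConnection

section FlatSection

variable [Field K] [CharZero K] [Fintype σ] [DecidableEq σ] [Fintype ι] [DecidableEq ι]
  {ω : σ → Matrix ι ι (MvPowerSeries σ K)}

theorem covDeriv_eulerSolution (hω : IsFlat ω) (i : σ) :
    covDeriv ω i (eulerSolution (-eulerContraction ω)) = 0 := by
  set T := eulerSolution (-eulerContraction ω)
  have hT : ∑ j, (X j : MvPowerSeries σ K) • covDeriv ω j T = 0 := by
    rw [sum_X_smul_covDeriv, euler_eulerSolution (map_constantCoeff_neg_eulerContraction ω),
      Matrix.neg_mul, neg_add_cancel]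
  set U := covDeriv ω i T
  have hU : U + ∑ j, (X j : MvPowerSeries σ K) • covDeriv ω j U = 0 := by
    calc U + ∑ j, (X j : MvPowerSeries σ K) • covDeriv ω j U
        = covDeriv ω i T + ∑ j, (X j : MvPowerSeries σ K) • covDeriv ω i (covDeriv ω j T) := by
          simp_rw [U, covDeriv_comm hω i]
      _ = 0 := by rw [← covDeriv_sum_X_smul i fun j => covDeriv ω j T, hT, covDeriv_zero]
  rw [sum_X_smul_covDeriv, ← add_assoc, add_eq_zero_iff_eq_neg, ← Matrix.neg_mul] at hU
  exact eq_zero_of_nsmul_add_euler_eq_mul 1 (map_constantCoeff_neg_eulerContraction ω)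
    (absurd · one_ne_zero) (by rw [one_smul, hU])

theorem existsUnique_covDeriv_eq_zero (hω : IsFlat ω) :
    ∃! T : Matrix ι ι (MvPowerSeries σ K),
      (∀ i, covDeriv ω i T = 0) ∧ T.map constantCoeff = 1 := by
  refine ⟨eulerSolution (-eulerContraction ω),
    ⟨covDeriv_eulerSolution hω, map_constantCoeff_eulerSolution _⟩, fun T ⟨hT, hT₀⟩ => ?_⟩
  refine eq_eulerSolution (map_constantCoeff_neg_eulerContraction ω) ?_ hT₀
  have := sum_X_smul_covDeriv (ω := ω) T
  rw [sum_eq_zero fun j _ => by rw [hT j, smul_zero], eq_comm, add_eq_zero_iff_eq_neg] at this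
  rw [this, Matrix.neg_mul]

end FlatSection

theorem isUnit_of_isUnit_map_constantCoeff [CommRing R] [Fintype ι] [DecidableEq ι]
    {M : Matrix ι ι (MvPowerSeries σ R)} (h : IsUnit (M.map constantCoeff)) : IsUnit M := by
  rw [Matrix.isUnit_iff_isUnit_det, isUnit_iff_constantCoeff, RingHom.map_det]
  exact (Matrix.isUnit_iff_isUnit_det _).1 h

end MatrixPowerSeries

/-- Let `K` be a field of characteristic zero, `R = K⟦t₁,…,t_n⟧`, and let
`ω = ∑ᵢ ωᵢ dtᵢ` be an `m×m` matrix of `1`-forms over `R` satisfying the integrability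
(flatness) condition `dω + ω ∧ ω = 0`, i.e.
`∂ᵢωⱼ - ∂ⱼωᵢ + ωᵢωⱼ - ωⱼωᵢ = 0` for all `i, j`.  Then there is a unique `m×m` matrix `T`
over `R` with `dT = -ω·T` (i.e. `∂ᵢT = -ωᵢ·T` for all `i`) and `T ≡ 1` modulo the
maximal ideal (constant term the identity matrix); moreover every such `T` is
invertible in `M_m(R)`. -/
theorem stmt8 {K : Type*} [Field K] [CharZero K] (n m : ℕ)
    (ω : Fin n → Matrix (Fin m) (Fin m) (MvPowerSeries (Fin n) K))
    (hflat : ∀ i j : Fin n,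
        (ω j).map (mvPderiv i) - (ω i).map (mvPderiv j) + ω i * ω j - ω j * ω i = 0) :
    (∃! T : Matrix (Fin m) (Fin m) (MvPowerSeries (Fin n) K),
        (∀ i, T.map (mvPderiv i) = -(ω i) * T) ∧
          T.map (MvPowerSeries.constantCoeff (σ := Fin n) (R := K)) = 1) ∧
      ∀ T : Matrix (Fin m) (Fin m) (MvPowerSeries (Fin n) K),
        ((∀ i, T.map (mvPderiv i) = -(ω i) * T) ∧
            T.map (MvPowerSeries.constantCoeff (σ := Fin n) (R := K)) = 1) → IsUnit T := by
  simp only [mvPderiv_eq_pderiv] at hflat ⊢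
  have hsol : ∀ T : Matrix (Fin m) (Fin m) (MvPowerSeries (Fin n) K),
      (∀ i, T.map (pderiv K i) = -(ω i) * T) ↔ ∀ i, MatrixPowerSeries.covDeriv ω i T = 0 := by
    simp only [MatrixPowerSeries.covDeriv, Matrix.neg_mul, eq_neg_iff_add_eq_zero, implies_true]
  simp only [hsol]
  exact ⟨MatrixPowerSeries.existsUnique_covDeriv_eq_zero hflat,
    fun T hT => MatrixPowerSeries.isUnit_of_isUnit_map_constantCoeff (hT.2 ▸ isUnit_one)⟩
end

section
/- Let (V, ω) be a symplectic vector space of dimension 2d over an algebraically closed field F, let r ≥ 4, and consider the closed condition on tuples: Z̃ = {(W, Φ₁,…,Φ_r) : W a nonzero isotropic subspace, each Φ_j Lagrangian, dim(Φ_j ∩ W) ≥ dim(W)/2 for all j}. Then the image Z of Z̃ under projection to the r-fold product of Lagrangian Grassmannians is a proper Zariski-closed subset of LGrass(V,ω)^r. -/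
/-!
By Darboux's theorem we may take `V = F^d × F^d` with `ω((x, y), (x', y')) = x ⬝ y' - y ⬝ x'`.
There take the Lagrangians `F^d × 0`, `0 × F^d` and the graphs of `x ↦ x` and `x ↦ c * x`, where
`c` has pairwise distinct entries. Suppose `W` is isotropic and meets each of them in at least half
its dimension. Each graph `Γ` is transversal to `0 × F^d`, so counting dimensions gives
`W = (Γ ∩ W) ⊕ ((0 × F^d) ∩ W)`; hence `S = {x | (x, 0) ∈ W}` is carried into
`S' = {y | (0, y) ∈ W}` both by the identity and by multiplication by `c`. As `dim S = dim S'`,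
`S = S'` is stable under `c`, and isotropy makes it orthogonal to itself for the dot product:
`∑ᵢ cᵢᵏ xᵢ² = 0` for all `k` and `x ∈ S`. The Vandermonde determinant forces `S = 0`, so `W = 0`.
-/

open Module LinearMap Submodule

section Isotropic

variable {R M N : Type*} [CommSemiring R] [AddCommMonoid M] [Module R M] [AddCommMonoid N]
  [Module R N]

def IsIsotropic (ω : LinearMap.BilinForm R M) (W : Submodule R M) : Prop :=
  ∀ x ∈ W, ∀ y ∈ W, ω x y = 0

variable {ω₀ : LinearMap.BilinForm R M} {ω : LinearMap.BilinForm R N} {f : M →ₗ[R] N}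

theorem IsIsotropic.map (hf : ∀ p q, ω (f p) (f q) = ω₀ p q) {L : Submodule R M}
    (hL : IsIsotropic ω₀ L) : IsIsotropic ω (L.map f) := by
  rintro _ ⟨p, hp, rfl⟩ _ ⟨q, hq, rfl⟩
  rw [hf]
  exact hL p hp q hq

theorem IsIsotropic.comap (hf : ∀ p q, ω (f p) (f q) = ω₀ p q) {W : Submodule R N}
    (hW : IsIsotropic ω W) : IsIsotropic ω₀ (W.comap f) := fun p hp q hq =>
  hf p q ▸ hW _ hp _ hq

end Isotropic

theorem finrank_map_inf_eq {K M N : Type*} [DivisionRing K] [AddCommGroup M] [Module K M]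
    [AddCommGroup N] [Module K N] (ψ : M ≃ₗ[K] N) (L : Submodule K M) (W : Submodule K N) :
    finrank K ↥(L.map ψ.toLinearMap ⊓ W) = finrank K ↥(L ⊓ W.comap ψ.toLinearMap) := by
  rw [← ψ.finrank_map_eq, map_inf _ ψ.injective, map_comap_eq_of_surjective ψ.surjective]

section Dimension

variable {K M : Type*} [DivisionRing K] [AddCommGroup M] [Module K M] [FiniteDimensional K M]

theorem finrank_inf_sup_inf_of_disjoint {U U' : Submodule K M} (h : Disjoint U U')
    (W : Submodule K M) :
    finrank K ↥(U ⊓ W ⊔ U' ⊓ W) = finrank K ↥(U ⊓ W) + finrank K ↥(U' ⊓ W) := by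
  rw [← finrank_sup_add_finrank_inf_eq, (h.mono inf_le_left inf_le_left).eq_bot, finrank_bot,
    add_zero]

variable {U U' W : Submodule K M} (h : Disjoint U U')
  (hU : finrank K W ≤ 2 * finrank K ↥(U ⊓ W)) (hU' : finrank K W ≤ 2 * finrank K ↥(U' ⊓ W))
include h hU hU'

theorem two_mul_finrank_inf_eq_of_disjoint : 2 * finrank K ↥(U ⊓ W) = finrank K W := by
  have := finrank_inf_sup_inf_of_disjoint h W
  have := finrank_mono (sup_le (inf_le_right : U ⊓ W ≤ W) (inf_le_right : U' ⊓ W ≤ W))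
  omega

theorem inf_sup_inf_eq_of_disjoint : U ⊓ W ⊔ U' ⊓ W = W := by
  refine eq_of_le_of_finrank_le (sup_le inf_le_right inf_le_right) ?_
  rw [finrank_inf_sup_inf_of_disjoint h]
  omega

end Dimension

section Graph

variable {R M N : Type*} [Ring R] [AddCommGroup M] [Module R M] [AddCommGroup N] [Module R N]

theorem disjoint_graph_ker_fst (T : M →ₗ[R] N) : Disjoint T.graph (ker (fst R M N)) := by
  rw [disjoint_iff_inf_le]
  rintro ⟨x, y⟩ ⟨hxy, hx⟩
  simp_all [mem_graph_iff]

theorem disjoint_ker_snd_ker_fst : Disjoint (ker (snd R M N)) (ker (fst R M N)) := by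
  rw [disjoint_iff_inf_le]
  rintro ⟨x, y⟩ ⟨hy, hx⟩
  simp_all

theorem apply_mem_comap_inr_of_mem_comap_inl {T : M →ₗ[R] N} {W : Submodule R (M × N)}
    (hW : T.graph ⊓ W ⊔ ker (fst R M N) ⊓ W = W) {x : M} (hx : x ∈ W.comap (inl R M N)) :
    T x ∈ W.comap (inr R M N) := by
  rw [← hW] at hx
  obtain ⟨c, hc, b, hb, hcb⟩ := mem_sup.1 hx
  have hcT : c.2 = T c.1 := (mem_inf.1 hc).1
  have hbW : b ∈ W := (mem_inf.1 hb).2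
  replace hb : b.1 = 0 := (mem_inf.1 hb).1
  have hc1 : c.1 = x := by simpa [hb] using congrArg Prod.fst hcb
  have hb2 : b.2 = -T x := by
    rw [← hc1, ← hcT]
    exact eq_neg_of_add_eq_zero_right (by simpa using congrArg Prod.snd hcb)
  have : inr R M N (T x) = -b := Prod.ext (by simp [hb]) (by simp [hb2])
  rw [mem_comap, this]
  exact W.neg_mem hbW

end Graph

section FinrankProd

variable {K M N : Type*} [DivisionRing K] [AddCommGroup M] [Module K M] [AddCommGroup N]
  [Module K N]

theorem finrank_graph (T : M →ₗ[K] N) : finrank K T.graph = finrank K M := by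
  rw [graph_eq_range_prod, finrank_range_of_inj]
  intro x y h
  simpa using congrArg Prod.fst h

theorem finrank_comap_inl (W : Submodule K (M × N)) :
    finrank K (W.comap (inl K M N)) = finrank K ↥(ker (snd K M N) ⊓ W) := by
  rw [ker_snd, ← map_comap_eq]
  exact (equivMapOfInjective _ inl_injective _).finrank_eq

theorem finrank_comap_inr (W : Submodule K (M × N)) :
    finrank K (W.comap (inr K M N)) = finrank K ↥(ker (fst K M N) ⊓ W) := by
  rw [ker_fst, ← map_comap_eq]
  exact (equivMapOfInjective _ inr_injective _).finrank_eq

end FinrankProd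

theorem eq_zero_of_forall_dotProduct_pow_mul_eq_zero {K : Type*} [Field K] {n : ℕ}
    {c x : Fin n → K} (hc : Function.Injective c) (h : ∀ k : ℕ, x ⬝ᵥ (c ^ k * x) = 0) :
    x = 0 := by
  have hsq : x * x = 0 := Matrix.eq_zero_of_forall_pow_sum_mul_pow_eq_zero hc fun k => by
    rw [← h k]
    exact Finset.sum_congr rfl fun i _ => by simp only [Pi.mul_apply, Pi.pow_apply]; ring
  funext i
  exact mul_self_eq_zero.1 (congrFun hsq i)

section StandardModel

variable {ι K : Type*} [Fintype ι] [Field K]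

variable (ι K) in
def stdSymplecticForm : LinearMap.BilinForm K ((ι → K) × (ι → K)) :=
  (dotProductBilin K K).compl₁₂ (fst K _ _) (snd K _ _) -
    (dotProductBilin K K).compl₁₂ (snd K _ _) (fst K _ _)

@[simp]
theorem stdSymplecticForm_apply (p q : (ι → K) × (ι → K)) :
    stdSymplecticForm ι K p q = p.1 ⬝ᵥ q.2 - p.2 ⬝ᵥ q.1 := rfl

theorem stdSymplecticForm_separatingLeft : (stdSymplecticForm ι K).SeparatingLeft := by
  classical
  intro p hp
  ext i
  · simpa using hp (0, Pi.single i 1)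
  · simpa using hp (Pi.single i 1, 0)

theorem isIsotropic_ker_snd : IsIsotropic (stdSymplecticForm ι K) (ker (snd K _ _)) := by
  intro p hp q hq
  simp_all

theorem isIsotropic_ker_fst : IsIsotropic (stdSymplecticForm ι K) (ker (fst K _ _)) := by
  intro p hp q hq
  simp_all

theorem isIsotropic_graph_mulLeft (μ : ι → K) :
    IsIsotropic (stdSymplecticForm ι K) (mulLeft K μ).graph := by
  intro p hp q hq
  rw [mem_graph_iff] at hp hq
  simp only [stdSymplecticForm_apply, hp, hq, mulLeft_apply, dotProduct, Pi.mul_apply,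
    sub_eq_zero]
  exact Finset.sum_congr rfl fun i _ => by ring

theorem finrank_ker_snd : finrank K (ker (snd K (ι → K) (ι → K))) = Fintype.card ι := by
  rw [ker_snd, finrank_range_of_inj inl_injective, finrank_fintype_fun_eq_card]

theorem finrank_ker_fst : finrank K (ker (fst K (ι → K) (ι → K))) = Fintype.card ι := by
  rw [ker_fst, finrank_range_of_inj inr_injective, finrank_fintype_fun_eq_card]

def fourLagrangians {n : ℕ} (c : Fin n → K) : Fin 4 → Submodule K ((Fin n → K) × (Fin n → K)) :=
  ![ker (snd K _ _), ker (fst K _ _), (mulLeft K 1).graph, (mulLeft K c).graph]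

theorem isIsotropic_fourLagrangians {n : ℕ} (c : Fin n → K) (k : Fin 4) :
    IsIsotropic (stdSymplecticForm (Fin n) K) (fourLagrangians c k) := by
  fin_cases k
  exacts [isIsotropic_ker_snd, isIsotropic_ker_fst, isIsotropic_graph_mulLeft 1,
    isIsotropic_graph_mulLeft c]

theorem finrank_fourLagrangians {n : ℕ} (c : Fin n → K) (k : Fin 4) :
    finrank K (fourLagrangians c k) = n := by
  fin_cases k
  exacts [finrank_ker_snd.trans (Fintype.card_fin n), finrank_ker_fst.trans (Fintype.card_fin n),
    (finrank_graph _).trans (finrank_fin_fun K), (finrank_graph _).trans (finrank_fin_fun K)]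

theorem eq_bot_of_forall_finrank_le_two_mul_finrank_inf {n : ℕ} {c : Fin n → K}
    (hc : Function.Injective c) {W : Submodule K ((Fin n → K) × (Fin n → K))}
    (hW : IsIsotropic (stdSymplecticForm (Fin n) K) W)
    (hWL : ∀ k, finrank K W ≤ 2 * finrank K ↥(fourLagrangians c k ⊓ W)) : W = ⊥ := by
  have hE : finrank K W ≤ 2 * finrank K ↥(ker (snd K _ _) ⊓ W) := hWL 0
  have hF : finrank K W ≤ 2 * finrank K ↥(ker (fst K _ _) ⊓ W) := hWL 1
  have h₁ : finrank K W ≤ 2 * finrank K ↥((mulLeft K 1).graph ⊓ W) := hWL 2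
  have hc' : finrank K W ≤ 2 * finrank K ↥((mulLeft K c).graph ⊓ W) := hWL 3
  have hdimE := two_mul_finrank_inf_eq_of_disjoint disjoint_ker_snd_ker_fst hE hF
  have hdimF := two_mul_finrank_inf_eq_of_disjoint disjoint_ker_snd_ker_fst.symm hF hE
  rw [← finrank_comap_inl] at hdimE
  rw [← finrank_comap_inr] at hdimF
  set S := W.comap (inl K (Fin n → K) (Fin n → K))
  set S' := W.comap (inr K (Fin n → K) (Fin n → K))
  have hSS' : S ≤ S' := fun x hx => by
    simpa only [mulLeft_apply, one_mul] using apply_mem_comap_inr_of_mem_comap_inl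
      (inf_sup_inf_eq_of_disjoint (disjoint_graph_ker_fst _) h₁ hF) hx
  have hS'S : S' = S := (eq_of_le_of_finrank_eq hSS' (by omega)).symm
  have hcS : ∀ x ∈ S, c * x ∈ S := fun x hx => hS'S ▸ apply_mem_comap_inr_of_mem_comap_inl
    (inf_sup_inf_eq_of_disjoint (disjoint_graph_ker_fst _) hc' hF) hx
  have hpowS : ∀ x ∈ S, ∀ k : ℕ, c ^ k * x ∈ S := by
    intro x hx k
    induction k with
    | zero => simpa using hx
    | succ k ih => simpa [pow_succ', mul_assoc] using hcS _ ih
  have hdot : ∀ x ∈ S, ∀ y ∈ S, x ⬝ᵥ y = 0 := by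
    intro x hx y hy
    rw [← hS'S] at hy
    simpa using hW _ hx _ hy
  have hS : S = ⊥ := eq_bot_iff.2 fun x hx => (mem_bot K).2 <|
    eq_zero_of_forall_dotProduct_pow_mul_eq_zero hc fun k => hdot x hx _ (hpowS x hx k)
  rw [hS, finrank_bot] at hdimE
  exact finrank_eq_zero.1 hdimE.symm

end StandardModel

section Darboux

variable {K V : Type*} [Field K] [AddCommGroup V] [Module K V]

structure IsSymplecticFamily {ι : Type*} [DecidableEq ι] (ω : LinearMap.BilinForm K V)
    (e f : ι → V) : Prop where
  apply_e_e : ∀ i j, ω (e i) (e j) = 0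
  apply_f_f : ∀ i j, ω (f i) (f j) = 0
  apply_e_f : ∀ i j, ω (e i) (f j) = if i = j then 1 else 0

variable {ω : LinearMap.BilinForm K V}

section Complement

variable (halt : ω.IsAlt) {e₀ f₀ : V} (h₀ : ω e₀ f₀ = 1)
include halt h₀

theorem sub_smul_add_smul_mem_ker_inf_ker (w : V) :
    w - ω e₀ w • f₀ + ω f₀ w • e₀ ∈ ker (ω e₀) ⊓ ker (ω f₀) := by
  have h₁ : ω f₀ e₀ = -1 := by rw [← halt.neg_eq, h₀]
  simp [h₀, h₁, halt.self_eq_zero]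

theorem finrank_ker_inf_ker_add_two [FiniteDimensional K V] :
    finrank K ↥(ker (ω e₀) ⊓ ker (ω f₀)) + 2 = finrank K V := by
  have h₁ : ω f₀ e₀ = -1 := by rw [← halt.neg_eq, h₀]
  have hsurj : Function.Surjective ((ω e₀).prod (ω f₀)) := fun ab =>
    ⟨ab.1 • f₀ - ab.2 • e₀, by simp [h₀, h₁, halt.self_eq_zero]⟩
  rw [← ker_prod, ← (ω e₀).prod (ω f₀) |>.finrank_range_add_finrank_ker, range_eq_top.2 hsurj,
    finrank_top, finrank_prod, finrank_self]
  ring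

theorem nondegenerate_restrict_ker_inf_ker (hnd : ω.Nondegenerate) :
    (ω.restrict (ker (ω e₀) ⊓ ker (ω f₀))).Nondegenerate := by
  have halt' : (ω.restrict (ker (ω e₀) ⊓ ker (ω f₀))).IsAlt := fun x => halt x
  refine halt'.isRefl.nondegenerate_iff_separatingLeft.2 fun v hv =>
    Subtype.ext (hnd.1 v fun w => ?_)
  obtain ⟨hve, hvf⟩ := mem_inf.1 v.2
  have hw := hv ⟨_, sub_smul_add_smul_mem_ker_inf_ker halt h₀ w⟩
  have hev : ω v e₀ = 0 := halt.isRefl _ _ hve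
  have hfv : ω v f₀ = 0 := halt.isRefl _ _ hvf
  simpa [hev, hfv] using hw

theorem IsSymplecticFamily.cons {n : ℕ} {e f : Fin n → ↥(ker (ω e₀) ⊓ ker (ω f₀))}
    (h : IsSymplecticFamily (ω.restrict _) e f) :
    IsSymplecticFamily ω (Fin.cons e₀ fun i => (e i : V)) (Fin.cons f₀ fun i => (f i : V)) := by
  have he₀ (v : ↥(ker (ω e₀) ⊓ ker (ω f₀))) : ω e₀ v = 0 := (mem_inf.1 v.2).1
  have hf₀ (v : ↥(ker (ω e₀) ⊓ ker (ω f₀))) : ω f₀ v = 0 := (mem_inf.1 v.2).2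
  have he₀' (v : ↥(ker (ω e₀) ⊓ ker (ω f₀))) : ω v e₀ = 0 := halt.isRefl _ _ (he₀ v)
  have hf₀' (v : ↥(ker (ω e₀) ⊓ ker (ω f₀))) : ω v f₀ = 0 := halt.isRefl _ _ (hf₀ v)
  have hee : ∀ i j, ω (e i) (e j) = 0 := h.apply_e_e
  have hff : ∀ i j, ω (f i) (f j) = 0 := h.apply_f_f
  have hef : ∀ i j, ω (e i) (f j) = if i = j then 1 else 0 := h.apply_e_f
  constructor <;> intro i j <;> cases i using Fin.cases <;> cases j using Fin.cases <;>
    simp [halt.self_eq_zero, h₀, he₀, hf₀, he₀', hf₀', hee, hff, hef, Fin.succ_ne_zero,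
      (Fin.succ_ne_zero _).symm]

end Complement

theorem exists_apply_eq_one (hnd : ω.Nondegenerate) [Nontrivial V] : ∃ e f, ω e f = 1 := by
  obtain ⟨e, he⟩ := exists_ne (0 : V)
  obtain ⟨u, hu⟩ : ∃ u, ω e u ≠ 0 := by
    by_contra! h
    exact he (hnd.1 e h)
  exact ⟨e, (ω e u)⁻¹ • u, by simp [hu]⟩

theorem exists_isSymplecticFamily (halt : ω.IsAlt) (hnd : ω.Nondegenerate)
    [FiniteDimensional K V] {n : ℕ} (hdim : finrank K V = 2 * n) :
    ∃ e f : Fin n → V, IsSymplecticFamily ω e f := by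
  induction n generalizing V with
  | zero => exact ⟨Fin.elim0, Fin.elim0, ⟨nofun, nofun, nofun⟩⟩
  | succ n ih =>
    have : Nontrivial V := nontrivial_of_finrank_pos (R := K) (by omega)
    obtain ⟨e₀, f₀, h₀⟩ := exists_apply_eq_one hnd
    obtain ⟨e, f, hef⟩ := ih (ω := ω.restrict (ker (ω e₀) ⊓ ker (ω f₀))) (fun x => halt x)
      (nondegenerate_restrict_ker_inf_ker halt h₀ hnd)
      (by have := finrank_ker_inf_ker_add_two halt h₀; omega)
    exact ⟨_, _, hef.cons halt h₀⟩

theorem IsSymplecticFamily.apply_coprod_linearCombination {ι : Type*} [Fintype ι]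
    [DecidableEq ι] (halt : ω.IsAlt) {e f : ι → V} (h : IsSymplecticFamily ω e f)
    (p q : (ι → K) × (ι → K)) :
    ω ((Fintype.linearCombination K e).coprod (Fintype.linearCombination K f) p)
        ((Fintype.linearCombination K e).coprod (Fintype.linearCombination K f) q) =
      stdSymplecticForm ι K p q := by
  have hfe (i j : ι) : ω (f i) (e j) = -if j = i then 1 else 0 := by
    rw [← halt.neg_eq, h.apply_e_f]
  simp [Fintype.linearCombination_apply, map_sum, h.apply_e_e, h.apply_f_f, h.apply_e_f, hfe,
    dotProduct, sub_eq_add_neg, mul_comm]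

theorem exists_linearEquiv_stdSymplecticForm (halt : ω.IsAlt) (hnd : ω.Nondegenerate)
    [FiniteDimensional K V] {n : ℕ} (hdim : finrank K V = 2 * n) :
    ∃ ψ : ((Fin n → K) × (Fin n → K)) ≃ₗ[K] V,
      ∀ p q, ω (ψ p) (ψ q) = stdSymplecticForm (Fin n) K p q := by
  obtain ⟨e, f, h⟩ := exists_isSymplecticFamily halt hnd hdim
  set ψ := (Fintype.linearCombination K e).coprod (Fintype.linearCombination K f)
  have hψ := h.apply_coprod_linearCombination halt
  have hinj : Function.Injective ψ := (injective_iff_map_eq_zero ψ).2 fun p hp =>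
    stdSymplecticForm_separatingLeft p fun q => by rw [← hψ, hp, map_zero, LinearMap.zero_apply]
  refine ⟨ψ.linearEquivOfInjective hinj ?_, hψ⟩
  simp [finrank_prod, hdim, two_mul]

end Darboux

/-- Let `(V, ω)` be a symplectic vector space of dimension `2d` over an algebraically
closed field `F` and let `r ≥ 4`.  The locus `Z` of `r`-tuples of Lagrangian subspaces
`(Φ₁,…,Φ_r)` for which there exists a nonzero isotropic subspace `W` with
`dim(Φⱼ ∩ W) ≥ (1/2)·dim W` for all `j` is a *proper* (closed) subset of the `r`-fold
product of Lagrangian Grassmannians: `Z ⊊ LGrass(V,ω)^r`. -/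
theorem stmt13 {F V : Type*} [Field F] [IsAlgClosed F] [AddCommGroup V] [Module F V]
    [FiniteDimensional F V]
    (ω : LinearMap.BilinForm F V) (halt : ω.IsAlt) (hnd : ω.Nondegenerate)
    (d r : ℕ) (hdim : Module.finrank F V = 2 * d) (hr : 4 ≤ r) :
    {Φ : Fin r → Submodule F V |
        (∀ j, (∀ x ∈ Φ j, ∀ y ∈ Φ j, ω x y = 0) ∧ Module.finrank F (Φ j) = d) ∧
          ∃ W : Submodule F V, W ≠ ⊥ ∧ (∀ x ∈ W, ∀ y ∈ W, ω x y = 0) ∧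
            ∀ j, Module.finrank F W ≤ 2 * Module.finrank F ↥(Φ j ⊓ W)}
      ⊂ {Φ : Fin r → Submodule F V |
          ∀ j, (∀ x ∈ Φ j, ∀ y ∈ Φ j, ω x y = 0) ∧ Module.finrank F (Φ j) = d} := by
  obtain ⟨ψ, hψ⟩ := exists_linearEquiv_stdSymplecticForm halt hnd hdim
  obtain ⟨c, hc⟩ : ∃ c : Fin d → F, Function.Injective c :=
    ⟨_, (Infinite.natEmbedding F).injective.comp Fin.val_injective⟩
  let idx (j : Fin r) : Fin 4 := ⟨j % 4, Nat.mod_lt _ four_pos⟩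
  have hidx (k : Fin 4) : idx ⟨k, by omega⟩ = k := Fin.ext (Nat.mod_eq_of_lt k.2)
  refine (Set.ssubset_iff_of_subset fun Φ hΦ => hΦ.1).2
    ⟨fun j => (fourLagrangians c (idx j)).map ψ.toLinearMap, fun j =>
      ⟨(isIsotropic_fourLagrangians c _).map hψ,
        by rw [LinearEquiv.finrank_map_eq, finrank_fourLagrangians]⟩, ?_⟩
  rintro ⟨-, W, hW0, hWiso, hW⟩
  have hWψ : finrank F (W.comap ψ.toLinearMap) = finrank F W := by
    rw [comap_equiv_eq_map_symm, LinearEquiv.finrank_map_eq]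
  refine hW0 (finrank_eq_zero.1 ?_)
  rw [← hWψ, eq_bot_of_forall_finrank_le_two_mul_finrank_inf hc (IsIsotropic.comap hψ hWiso)
    fun k => ?_, finrank_bot]
  have hk : finrank F W ≤
      2 * finrank F ↥((fourLagrangians c (idx ⟨k, by omega⟩)).map ψ.toLinearMap ⊓ W) :=
    hW ⟨k, by omega⟩
  rwa [hidx, finrank_map_inf_eq, ← hWψ] at hk
end

section
/- Let A → B be a graded quasi-isomorphism of sequences of complexes of abelian sheaves (i.e., a morphism of ℤ-indexed decreasing sequences of complexes inducing quasi-isomorphisms on all graded pieces gr^i = cone(F^{i+1} → F^i)), and suppose A has filtered cohomology objects, meaning the maps H^j(F^{i+1}A) → H^j(F^iA) are injective for all i, j. Then: (1) B also has filtered cohomology objects; (2) the induced maps on completions of cohomology with respect to the filtration, H^j(A)^∧ → H^j(B)^∧, are isomorphisms for all j. -/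
/-!
Injectivity of `H(F^{i+1}A) → H(F^iA)` in every degree kills the connecting maps in the long
exact cohomology sequence of the cone `gr^i A`, which thus splits into short exact sequences
`0 → H^n(F^{i+1}A) → H^n(F^iA) → H^n(gr^i A) → 0`. The connecting maps are natural, so along the
quasi-isomorphism `gr^i A → gr^i B` they vanish for `B` as well, and comparing the two short exact
sequences identifies the one-step quotients `H^n(F^iA)/H^n(F^{i+1}A) ≅ H^n(F^iB)/H^n(F^{i+1}B)`.
For `i ≤ k` the short exact sequences
`0 → H^n(F^k)/H^n(F^{k+1}) → H^n(F^i)/H^n(F^{k+1}) → H^n(F^i)/H^n(F^k) → 0`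
then give the general case by induction on `k` and the five lemma.
-/

open CategoryTheory CategoryTheory.Limits

namespace CategoryTheory

open Category

section Abelian

variable {C : Type*} [Category C] [Abelian C]

lemma ShortComplex.isIso_cokernel_map_of_isIso_τ₃ {S₁ S₂ : ShortComplex C} (ψ : S₁ ⟶ S₂)
    (h₁ : S₁.Exact) (h₂ : S₂.Exact) [Epi S₁.g] [Epi S₂.g] [IsIso ψ.τ₃] :
    IsIso (cokernel.map S₁.f S₂.f ψ.τ₁ ψ.τ₂ ψ.comm₁₂.symm) := by
  let e₁ := IsColimit.coconePointUniqueUpToIso (colimit.isColimit _) h₁.gIsCokernel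
  let e₂ := IsColimit.coconePointUniqueUpToIso (colimit.isColimit _) h₂.gIsCokernel
  refine ((MorphismProperty.isomorphisms C).arrow_mk_iso_iff
    (Arrow.isoMk e₁ e₂ ?_)).2 ‹IsIso ψ.τ₃›
  apply coequalizer.hom_ext
  simp [e₁, e₂, ψ.comm₂₃]

lemma shortExact_cokernel_map_comp {X Y Z : C} (f : X ⟶ Y) (g : Y ⟶ Z) [Mono g] :
    (ShortComplex.mk (cokernel.map f (f ≫ g) (𝟙 X) g (by simp))
      (cokernel.map (f ≫ g) g f (𝟙 Z) (by simp)) (by ext; simp)).ShortExact where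
  exact := (kernelCokernelCompSequence.snakeInput f g).L₃_exact
  mono_f := Abelian.mono_cokernel_map_of_isPullback
    (IsPullback.of_vert_isIso_mono (fst := f) (snd := 𝟙 X) ⟨by simp⟩)
  epi_g := epi_of_epi_fac (f := cokernel.π (f ≫ g)) (h := cokernel.π g) (by simp)

lemma isIso_cokernel_map_comp {X₂ X₁ X₀ Y₂ Y₁ Y₀ : C} (u : X₂ ⟶ X₁) (v : X₁ ⟶ X₀)
    (u' : Y₂ ⟶ Y₁) (v' : Y₁ ⟶ Y₀) (a₂ : X₂ ⟶ Y₂) (a₁ : X₁ ⟶ Y₁) (a₀ : X₀ ⟶ Y₀)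
    [Mono v] [Mono v'] (wu : u ≫ a₁ = a₂ ≫ u') (wv : v ≫ a₀ = a₁ ≫ v')
    [IsIso (cokernel.map u u' a₂ a₁ wu)] [IsIso (cokernel.map v v' a₁ a₀ wv)] :
    IsIso (cokernel.map (u ≫ v) (u' ≫ v') a₂ a₀ (by rw [assoc, wv, reassoc_of% wu])) := by
  let ψ : ShortComplex.mk (cokernel.map u (u ≫ v) (𝟙 X₂) v (by simp))
        (cokernel.map (u ≫ v) v u (𝟙 X₀) (by simp)) (by ext; simp) ⟶
      ShortComplex.mk (cokernel.map u' (u' ≫ v') (𝟙 Y₂) v' (by simp))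
        (cokernel.map (u' ≫ v') v' u' (𝟙 Y₀) (by simp)) (by ext; simp) :=
    { τ₁ := cokernel.map u u' a₂ a₁ wu
      τ₂ := cokernel.map (u ≫ v) (u' ≫ v') a₂ a₀ (by rw [assoc, wv, reassoc_of% wu])
      τ₃ := cokernel.map v v' a₁ a₀ wv
      comm₁₂ := by ext; simp [reassoc_of% wv]
      comm₂₃ := by ext; simp }
  exact ShortComplex.isIso₂_of_shortExact_of_isIso₁₃ ψ
    (shortExact_cokernel_map_comp u v) (shortExact_cokernel_map_comp u' v')

end Abelian

section Sequence

variable {C : Type*} [Category C]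

lemma Functor.map_homOfLE_refl (X : ℤᵒᵖ ⥤ C) (i : ℤ) :
    X.map (homOfLE (le_refl i)).op = 𝟙 _ :=
  X.map_id _

lemma Functor.map_homOfLE_succ (X : ℤᵒᵖ ⥤ C) {i k : ℤ} (h : i ≤ k) :
    X.map (homOfLE (Int.le_add_one h)).op =
      X.map (homOfLE (Int.le_add_one (le_refl k))).op ≫ X.map (homOfLE h).op := by
  rw [← X.map_comp]
  rfl

lemma Functor.mono_map_homOfLE (X : ℤᵒᵖ ⥤ C)
    (hX : ∀ i : ℤ, Mono (X.map (homOfLE (Int.le_add_one (le_refl i))).op)) {i k : ℤ} (h : i ≤ k) :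
    Mono (X.map (homOfLE h).op) := by
  induction k, h using Int.leInduction with
  | base =>
    rw [X.map_homOfLE_refl]
    infer_instance
  | succ k hik ih =>
    rw [X.map_homOfLE_succ hik]
    exact mono_comp _ _

lemma isIso_cokernel_map_homOfLE [Abelian C] {X Y : ℤᵒᵖ ⥤ C} (ψ : X ⟶ Y)
    (hX : ∀ i : ℤ, Mono (X.map (homOfLE (Int.le_add_one (le_refl i))).op))
    (hY : ∀ i : ℤ, Mono (Y.map (homOfLE (Int.le_add_one (le_refl i))).op))
    (hψ : ∀ i : ℤ, IsIso (cokernel.map (X.map (homOfLE (Int.le_add_one (le_refl i))).op)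
      (Y.map (homOfLE (Int.le_add_one (le_refl i))).op) (ψ.app (Opposite.op (i + 1)))
      (ψ.app (Opposite.op i)) (ψ.naturality _)))
    {i k : ℤ} (h : i ≤ k) :
    IsIso (cokernel.map (X.map (homOfLE h).op) (Y.map (homOfLE h).op) (ψ.app (Opposite.op k))
      (ψ.app (Opposite.op i)) (ψ.naturality _)) := by
  induction k, h using Int.leInduction with
  | base =>
    have : Epi (X.map (homOfLE (le_refl i)).op) := by rw [X.map_homOfLE_refl]; infer_instance
    have : Epi (Y.map (homOfLE (le_refl i)).op) := by rw [Y.map_homOfLE_refl]; infer_instance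
    exact (isZero_cokernel_of_epi _).isIso (isZero_cokernel_of_epi _) _
  | succ k hik ih =>
    have := X.mono_map_homOfLE hX hik
    have := Y.mono_map_homOfLE hY hik
    have := hψ k
    have := isIso_cokernel_map_comp _ _ _ _ _ _ _
      (ψ.naturality (homOfLE (Int.le_add_one (le_refl k))).op) (ψ.naturality (homOfLE hik).op)
    convert this using 2 <;> exact Functor.map_homOfLE_succ _ hik

end Sequence

end CategoryTheory

namespace CategoryTheory.Functor

open Pretriangulated

variable {D A : Type*} [Category D] [Preadditive D] [HasZeroObject D] [HasShift D ℤ]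
  [∀ n : ℤ, (shiftFunctor D n).Additive] [Pretriangulated D] [Category A] [Abelian A]
  (F : D ⥤ A) [F.IsHomological] [F.ShiftSequence ℤ]

lemma homologySequence_shortExact {T : Triangle D} (hT : T ∈ distTriang D)
    (hT₁ : ∀ n : ℤ, Mono ((F.shift n).map T.mor₁)) (n : ℤ) :
    (ShortComplex.mk _ _ (F.homologySequence_comp T hT n)).ShortExact where
  exact := F.homologySequence_exact₂ T hT n
  mono_f := hT₁ n
  epi_g := (F.homologySequence_epi_shift_map_mor₂_iff T hT n (n + 1) rfl).2
    ((F.homologySequence_mono_shift_map_mor₁_iff T hT n (n + 1) rfl).1 (hT₁ (n + 1)))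

lemma mono_shift_map_mor₁_of_isIso_hom₃ {T T' : Triangle D} (hT : T ∈ distTriang D)
    (hT' : T' ∈ distTriang D) (ψ : T ⟶ T') (hψ : ∀ n : ℤ, IsIso ((F.shift n).map ψ.hom₃))
    (hT₁ : ∀ n : ℤ, Mono ((F.shift n).map T.mor₁)) (n : ℤ) :
    Mono ((F.shift n).map T'.mor₁) := by
  have := hψ (n - 1)
  refine (F.homologySequence_mono_shift_map_mor₁_iff T' hT' (n - 1) n (by omega)).2
    ((cancel_epi ((F.shift (n - 1)).map ψ.hom₃)).1 ?_)
  rw [comp_zero, F.homologySequenceδ_naturality T T' ψ,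
    (F.homologySequence_mono_shift_map_mor₁_iff T hT (n - 1) n (by omega)).1 (hT₁ n), zero_comp]

end CategoryTheory.Functor

namespace HomotopyCategory

open HomologicalComplex

variable {C ι : Type*} [Category C] [Preadditive C] [CategoryWithHomology C] {c : ComplexShape ι}

noncomputable def homologyFunctorMapQuotientArrowIso (n : ι) {K L : HomologicalComplex C c}
    (f : K ⟶ L) :
    Arrow.mk ((homologyFunctor C c n).map ((quotient C c).map f)) ≅ Arrow.mk (homologyMap f n) :=
  ((Functor.mapArrowFunctor _ _).mapIso (homologyFunctorFactors C c n)).app (Arrow.mk f)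

lemma mono_homologyFunctor_map_quotient_map_iff (n : ι) {K L : HomologicalComplex C c}
    (f : K ⟶ L) :
    Mono ((homologyFunctor C c n).map ((quotient C c).map f)) ↔ Mono (homologyMap f n) :=
  (MorphismProperty.monomorphisms C).arrow_mk_iso_iff (homologyFunctorMapQuotientArrowIso n f)

lemma isIso_homologyFunctor_map_quotient_map_iff (n : ι) {K L : HomologicalComplex C c}
    (f : K ⟶ L) :
    IsIso ((homologyFunctor C c n).map ((quotient C c).map f)) ↔ IsIso (homologyMap f n) :=
  (MorphismProperty.isomorphisms C).arrow_mk_iso_iff (homologyFunctorMapQuotientArrowIso n f)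

end HomotopyCategory

namespace CochainComplex.mappingCone

open HomotopyCategory
open HomologicalComplex (homologyMap homologyMap_comp homologyMap_zero)

variable {C : Type*} [Category C] [Abelian C] {K L : CochainComplex C ℤ} (f : K ⟶ L)

lemma homologyMap_comp_homologyMap_inr (n : ℤ) : homologyMap f n ≫ homologyMap (inr f) n = 0 := by
  have h : (quotient C _).map (f ≫ inr f) = (quotient C _).map 0 := by
    rw [Functor.map_comp, Functor.map_zero]
    exact Pretriangulated.comp_distTriang_mor_zero₁₂ _ (mappingCone_triangleh_distinguished f)
  rw [← homologyMap_comp, (homotopyOfEq _ _ h).homologyMap_eq, homologyMap_zero]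

noncomputable abbrev homologyShortComplex (n : ℤ) : ShortComplex C :=
  ShortComplex.mk (homologyMap f n) (homologyMap (inr f) n) (homologyMap_comp_homologyMap_inr f n)

noncomputable def homologySequenceIso (n : ℤ) :
    ShortComplex.mk _ _ ((homologyFunctor C (.up ℤ) 0).homologySequence_comp _
      (mappingCone_triangleh_distinguished f) n) ≅ homologyShortComplex f n :=
  ShortComplex.isoMk ((homologyFunctorFactors C (.up ℤ) n).app K)
    ((homologyFunctorFactors C (.up ℤ) n).app L)
    ((homologyFunctorFactors C (.up ℤ) n).app (mappingCone f))
    ((homologyFunctorFactors C (.up ℤ) n).hom.naturality f).symm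
    ((homologyFunctorFactors C (.up ℤ) n).hom.naturality (inr f)).symm

lemma homologyShortComplex_shortExact (hf : ∀ n, Mono (homologyMap f n)) (n : ℤ) :
    (homologyShortComplex f n).ShortExact :=
  ShortComplex.shortExact_of_iso (homologySequenceIso f n)
    ((homologyFunctor C (.up ℤ) 0).homologySequence_shortExact
      (mappingCone_triangleh_distinguished f)
      (fun n => (mono_homologyFunctor_map_quotient_map_iff n f).2 (hf n)) n)

variable {K' L' : CochainComplex C ℤ} {f} {g : K' ⟶ L'} {a : K ⟶ K'} {b : L ⟶ L'}
  (w : f ≫ b = a ≫ g)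

lemma mono_homologyMap_of_quasiIso_map [QuasiIso (map f g a b w)]
    (hf : ∀ n, Mono (homologyMap f n)) (n : ℤ) : Mono (homologyMap g n) :=
  (mono_homologyFunctor_map_quotient_map_iff n g).1
    ((homologyFunctor C (.up ℤ) 0).mono_shift_map_mor₁_of_isIso_hom₃
      (mappingCone_triangleh_distinguished f) (mappingCone_triangleh_distinguished g)
      ((quotient C _).mapTriangle.map (triangleMap f g a b w))
      (fun n => (isIso_homologyFunctor_map_quotient_map_iff n (map f g a b w)).2 inferInstance)
      (fun n => (mono_homologyFunctor_map_quotient_map_iff n f).2 (hf n)) n)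

noncomputable def homologyShortComplexMap (n : ℤ) :
    homologyShortComplex f n ⟶ homologyShortComplex g n where
  τ₁ := homologyMap a n
  τ₂ := homologyMap b n
  τ₃ := homologyMap (map f g a b w) n
  comm₁₂ := by
    rw [← homologyMap_comp, ← homologyMap_comp, w]
  comm₂₃ := by
    rw [← homologyMap_comp, ← homologyMap_comp]
    exact congrArg (homologyMap · n) (triangleMap f g a b w).comm₂.symm

lemma isIso_cokernel_map_homologyMap [QuasiIso (map f g a b w)]
    (hf : ∀ n, Mono (homologyMap f n)) (n : ℤ) :
    IsIso (cokernel.map (homologyMap f n) (homologyMap g n) (homologyMap a n) (homologyMap b n)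
      (by simp [← homologyMap_comp, w])) := by
  have hS₁ := homologyShortComplex_shortExact f hf n
  have hS₂ := homologyShortComplex_shortExact g (mono_homologyMap_of_quasiIso_map w hf) n
  have := hS₁.epi_g
  have := hS₂.epi_g
  have : IsIso (homologyShortComplexMap w n).τ₃ := inferInstanceAs (IsIso (homologyMap _ n))
  exact ShortComplex.isIso_cokernel_map_of_isIso_τ₃ (homologyShortComplexMap w n)
    hS₁.exact hS₂.exact

end CochainComplex.mappingCone

/-- Let `A → B` be a morphism of sequences of complexes in an abelian category `C`
(a sequence of complexes is a functor `ℤᵒᵖ ⥤ CochainComplex C ℤ`, the `i`-th term being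
`F^i A = A(op i)` with transition maps `F^{i+1}A → F^iA`).  Assume it is a *graded
quasi-isomorphism*, i.e. the induced morphisms on the mapping cones
`gr^i = cone(F^{i+1} → F^i)` are quasi-isomorphisms, and that `A` has *filtered
cohomology objects*, i.e. the maps `H^j(F^{i+1}A) → H^j(F^iA)` are monomorphisms for
all `i, j`.  Then:
(1) `B` also has filtered cohomology objects; and
(2) the induced maps on the completions of cohomology with respect to the filtration
are isomorphisms; concretely, for all `k ≥ i` and all `j`, the induced map
`H^j(F^iA)/H^j(F^kA) → H^j(F^iB)/H^j(F^kB)` (a map of cokernels) is an isomorphism,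
and hence so is the induced map on inverse limits `H^j(A)^∧ → H^j(B)^∧`. -/
theorem stmt16 {C : Type*} [Category C] [Abelian C]
    (A B : ℤᵒᵖ ⥤ CochainComplex C ℤ) (φ : A ⟶ B)
    (hA : ∀ i j : ℤ, Mono (HomologicalComplex.homologyMap
        (A.map (homOfLE (show i ≤ i + 1 by omega)).op) j))
    (hgr : ∀ i : ℤ, ∃ w : A.map (homOfLE (show i ≤ i + 1 by omega)).op ≫ φ.app (Opposite.op i) =
        φ.app (Opposite.op (i + 1)) ≫ B.map (homOfLE (show i ≤ i + 1 by omega)).op, QuasiIso (CochainComplex.mappingCone.map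
        (A.map (homOfLE (show i ≤ i + 1 by omega)).op)
        (B.map (homOfLE (show i ≤ i + 1 by omega)).op)
        (φ.app (Opposite.op (i + 1))) (φ.app (Opposite.op i)) w)) :
    (∀ i j : ℤ, Mono (HomologicalComplex.homologyMap
        (B.map (homOfLE (show i ≤ i + 1 by omega)).op) j)) ∧
    (∀ (i k : ℤ) (h : i ≤ k) (j : ℤ), ∃ w, IsIso (cokernel.map
        (HomologicalComplex.homologyMap (A.map (homOfLE h).op) j)
        (HomologicalComplex.homologyMap (B.map (homOfLE h).op) j)
        (HomologicalComplex.homologyMap (φ.app (Opposite.op k)) j)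
        (HomologicalComplex.homologyMap (φ.app (Opposite.op i)) j) w)) := by
  have hB (i j : ℤ) : Mono (HomologicalComplex.homologyMap
      (B.map (homOfLE (show i ≤ i + 1 by omega)).op) j) := by
    obtain ⟨w, _⟩ := hgr i
    exact CochainComplex.mappingCone.mono_homologyMap_of_quasiIso_map w (hA i) j
  refine ⟨hB, fun i k h j => ⟨_, isIso_cokernel_map_homOfLE
    (Functor.whiskerRight φ (HomologicalComplex.homologyFunctor C _ j))
    (fun i => hA i j) (fun i => hB i j) (fun i => ?_) h⟩⟩
  obtain ⟨w, _⟩ := hgr i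
  exact CochainComplex.mappingCone.isIso_cokernel_map_homologyMap w (hA i) j
end
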